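/- Hero-and-sidekick lower bound: for every even n ≥ 8 there exists a preference network on n members such that at least 2^{n/2} distinct subsets satisfy both the Group Stability and Self-Approval axioms. Specifically, partition V into n/2 hero–sidekick pairs, where each member of a pair ranks first its hero, then its sidekick, then all other heroes, then all other sidekicks; then every set consisting of all heroes together with an arbitrary set of sidekicks is group stable and self-approving. -/

import Mathlib

/-!
Every member of pair `i` ranks its own hero first, its own sidekick second, then the other heroes,
then the other sidekicks. If `S` contains every hero, everything outside `S` is a sidekick, so a
hero of `S` strictly prefers itself to any outsider: `S` approves itself. A deviation `G ⊊ S` is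
blocked by the hero of a sidekick of `G` whose hero is outside `G` (it ranks that sidekick second,
any outsider lower); failing that, if `G` has all heroes, by a sidekick outside `G` (it ranks its
hero first); otherwise by a hero `h_j` outside `G`, who prefers every hero to every sidekick but its
own. If `G` has two heroes, the injective `f` sends at most one of them to `j`'s sidekick; if `G`
lies within one pair, then `|G'| ≤ 2`, and with at least four pairs `j` can be chosen so that `j`'s
sidekick is not in `G'`.
-/

/-- A preference (linear order) on `V`, given as a ranking bijection; `u ≻_π v` iff `π u < π v`. -/
abbrev Pref (V : Type*) [Fintype V] : Type _ := V ≃ Fin (Fintype.card V)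

/-- Group stability of `S` w.r.t. profile `P`: for every nonempty `G ⊊ S`, every equal-size
`G' ⊆ V − S`, and every family of bijections `(f_s : G → G')_{s ∈ S−G}`, some `s ∈ S − G`
and `u ∈ G` satisfy `u ≻_{π_s} f_s(u)`. -/
def GroupStable {V : Type*} [Fintype V] [DecidableEq V]
    (P : V → Pref V) (S : Finset V) : Prop :=
  ∀ G : Finset V, G ⊂ S → G.Nonempty → ∀ G' : Finset V, (∀ x ∈ G', x ∉ S) →
    G'.card = G.card →
    ∀ f : ↥(S \ G) → ↥G → ↥G', (∀ s, Function.Bijective (f s)) →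
      ∃ s : ↥(S \ G), ∃ u : ↥G, P s.1 u.1 < P s.1 (f s u).1

/-- Self-approval of `S` w.r.t. profile `P`: for every `G' ⊆ V − S` with `|G'| = |S|` and
every family of bijections `(f_s : S → G')_{s ∈ S}`, some `s, u ∈ S` satisfy
`u ≻_{π_s} f_s(u)`. -/
def SelfApprove {V : Type*} [Fintype V] [DecidableEq V]
    (P : V → Pref V) (S : Finset V) : Prop :=
  ∀ G' : Finset V, (∀ x ∈ G', x ∉ S) → G'.card = S.card →
    ∀ f : ↥S → ↥S → ↥G', (∀ s, Function.Bijective (f s)) →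
      ∃ s u : ↥S, P s.1 u.1 < P s.1 (f s u).1

theorem exists_pref_of_rank_lt {V : Type*} [Fintype V] (t : V → ℕ) :
    ∃ π : Pref V, ∀ u w, t u < t w → π u < π w := by
  let key : V → Lex (ℕ × Fin (Fintype.card V)) := fun u => toLex (t u, Fintype.equivFin V u)
  have key_inj : Function.Injective key := fun u w h =>
    (Fintype.equivFin V).injective (congrArg (fun p => (ofLex p).2) h)
  let _ : LinearOrder V := LinearOrder.lift' key key_inj
  refine ⟨(Fintype.orderIsoFinOfCardEq V rfl).symm.toEquiv, fun u w h => ?_⟩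
  change (Fintype.orderIsoFinOfCardEq V rfl).symm u < (Fintype.orderIsoFinOfCardEq V rfl).symm w
  rw [OrderIso.lt_iff_lt]
  exact Prod.Lex.lt_iff.mpr (Or.inl h)

namespace HeroSidekick

open Finset

variable {ι V : Type*} [DecidableEq ι] [Fintype V] (e : V ≃ ι × Bool)

/-- `e v = (i, true)` makes `v` the hero of pair `i`, and `e v = (i, false)` its sidekick. -/
def tier (i : ι) (u : V) : ℕ :=
  (if (e u).1 = i then 0 else 2) + (if (e u).2 then 0 else 1)

noncomputable def profile (s : V) : Pref V :=
  Classical.choose (exists_pref_of_rank_lt (tier e (e s).1))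

def heroesWith (T : Finset ι) : Finset V :=
  univ.filter fun v => (e v).2 = true ∨ (e v).1 ∈ T

variable {e}

theorem profile_lt_of_tier_lt {s u w : V} (h : tier e (e s).1 u < tier e (e s).1 w) :
    profile e s u < profile e s w :=
  Classical.choose_spec (exists_pref_of_rank_lt (tier e (e s).1)) u w h

theorem profile_lt_of_eq_hero {s u w : V} (hu : e u = ((e s).1, true)) (hw : w ≠ u) :
    profile e s u < profile e s w := by
  apply profile_lt_of_tier_lt
  have hw' : e w ≠ ((e s).1, true) := hu ▸ e.injective.ne hw
  unfold tier
  split_ifs <;> simp_all [Prod.ext_iff]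

theorem profile_lt_of_other_sidekick {s u w : V} (hu : (e u).1 = (e s).1 ∨ (e u).2 = true)
    (hw₁ : (e w).1 ≠ (e s).1) (hw₂ : (e w).2 = false) :
    profile e s u < profile e s w := by
  apply profile_lt_of_tier_lt
  unfold tier
  split_ifs <;> simp_all

theorem mem_heroesWith {T : Finset ι} {v : V} :
    v ∈ heroesWith e T ↔ (e v).2 = true ∨ (e v).1 ∈ T := by
  simp [heroesWith]

theorem hero_mem_heroesWith (T : Finset ι) (i : ι) : e.symm (i, true) ∈ heroesWith e T := by
  simp [mem_heroesWith]

theorem sidekick_mem_heroesWith_iff {T : Finset ι} {i : ι} :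
    e.symm (i, false) ∈ heroesWith e T ↔ i ∈ T := by
  simp [mem_heroesWith]

theorem snd_eq_false_of_not_mem_heroesWith {T : Finset ι} {v : V} (hv : v ∉ heroesWith e T) :
    (e v).2 = false := by
  simp_all [mem_heroesWith]

theorem heroesWith_injective : Function.Injective (heroesWith e : Finset ι → Finset V) :=
  fun T T' h => by ext i; rw [← sidekick_mem_heroesWith_iff (e := e), h, sidekick_mem_heroesWith_iff]

variable [DecidableEq V]

theorem selfApprove_heroesWith [Nonempty ι] (T : Finset ι) :
    SelfApprove (profile e) (heroesWith e T) := by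
  intro G' hG' _ f _
  let i : ι := Classical.arbitrary ι
  let s : heroesWith e T := ⟨e.symm (i, true), hero_mem_heroesWith T i⟩
  refine ⟨s, s, profile_lt_of_eq_hero (by simp [s]) fun h => hG' _ (f s s).2 (h ▸ s.2)⟩


section GroupStable

variable {T : Finset ι} {G G' : Finset V} (hG' : ∀ x ∈ G', x ∉ heroesWith e T)
  (f : ↥(heroesWith e T \ G) → ↥G → ↥G')
include hG'

theorem exists_lt_of_sidekick_mem (hGS : G ⊆ heroesWith e T) {u : V} (hu : u ∈ G)
    (hu₂ : (e u).2 = false) (hhero : e.symm ((e u).1, true) ∉ G) :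
    ∃ s : ↥(heroesWith e T \ G), ∃ u : ↥G, profile e s.1 u.1 < profile e s.1 (f s u).1 := by
  let s : ↥(heroesWith e T \ G) := ⟨_, mem_sdiff.2 ⟨hero_mem_heroesWith T _, hhero⟩⟩
  have hfu : (e (f s ⟨u, hu⟩)).2 = false := snd_eq_false_of_not_mem_heroesWith (hG' _ (f s _).2)
  refine ⟨s, ⟨u, hu⟩, profile_lt_of_other_sidekick (Or.inl (by simp [s])) (fun h => ?_) hfu⟩
  have : (f s ⟨u, hu⟩ : V) = u := e.injective (Prod.ext (by simpa [s] using h) (hfu.trans hu₂.symm))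
  exact hG' _ (f s _).2 (this ▸ hGS hu)

theorem exists_lt_of_heroes_subset (hGS : G ⊂ heroesWith e T)
    (hall : ∀ i, e.symm (i, true) ∈ G) :
    ∃ s : ↥(heroesWith e T \ G), ∃ u : ↥G, profile e s.1 u.1 < profile e s.1 (f s u).1 := by
  obtain ⟨x, hxS, hxG⟩ := exists_of_ssubset hGS
  let s : ↥(heroesWith e T \ G) := ⟨x, mem_sdiff.2 ⟨hxS, hxG⟩⟩
  let u : ↥G := ⟨e.symm ((e x).1, true), hall _⟩
  exact ⟨s, u, profile_lt_of_eq_hero (by simp [s, u])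
    fun h => hG' _ (f s u).2 (h ▸ hGS.subset u.2)⟩

theorem exists_lt_of_two_heroes_mem (hf : ∀ s, Function.Injective (f s)) {j i₁ i₂ : ι}
    (hj : e.symm (j, true) ∉ G) (hi : i₁ ≠ i₂)
    (hi₁ : e.symm (i₁, true) ∈ G) (hi₂ : e.symm (i₂, true) ∈ G) :
    ∃ s : ↥(heroesWith e T \ G), ∃ u : ↥G, profile e s.1 u.1 < profile e s.1 (f s u).1 := by
  let s : ↥(heroesWith e T \ G) := ⟨_, mem_sdiff.2 ⟨hero_mem_heroesWith T _, hj⟩⟩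
  have hsidekick (u : ↥G) : (e (f s u)).2 = false :=
    snd_eq_false_of_not_mem_heroesWith (hG' _ (f s u).2)
  obtain ⟨u, hu, hfu⟩ : ∃ u : ↥G, (e u).2 = true ∧ (e (f s u)).1 ≠ j := by
    by_contra! h
    have h₁ := h ⟨_, hi₁⟩ (by simp)
    have h₂ := h ⟨_, hi₂⟩ (by simp)
    have := hf s (Subtype.ext (e.injective (Prod.ext (h₁.trans h₂.symm)
      ((hsidekick _).trans (hsidekick _).symm))))
    exact hi (by simpa using congrArg (fun u : ↥G => (e u).1) this)
  exact ⟨s, u, profile_lt_of_other_sidekick (Or.inr hu) (by simpa [s] using hfu) (hsidekick u)⟩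

theorem exists_lt_of_subset_pair [Fintype ι] (h4 : 4 ≤ Fintype.card ι) (hcard : #G' = #G)
    {i : ι} (hi : e.symm (i, true) ∈ G) (hGi : ∀ v ∈ G, (e v).1 = i) :
    ∃ s : ↥(heroesWith e T \ G), ∃ u : ↥G, profile e s.1 u.1 < profile e s.1 (f s u).1 := by
  have hG2 : #G ≤ 2 := by
    calc #G ≤ #{(i, true), (i, false)} :=
          card_le_card_of_injOn e (fun v hv => by cases h : (e v).2 <;> simp [← hGi v hv, ← h])
            e.injective.injOn
      _ ≤ 2 := card_le_two
  let blocked : Finset ι := insert i (G'.image fun w => (e w).1)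
  obtain ⟨j, -, hj⟩ : ∃ j ∈ univ, j ∉ blocked := by
    refine exists_mem_notMem_of_card_lt_card ?_
    calc #blocked ≤ #G' + 1 := (card_insert_le _ _).trans (by grind [card_image_le])
      _ < #(univ : Finset ι) := by rw [card_univ]; omega
  have hji : j ≠ i := fun h => hj (h ▸ mem_insert_self _ _)
  let s : ↥(heroesWith e T \ G) :=
    ⟨_, mem_sdiff.2 ⟨hero_mem_heroesWith T j, fun h => hji (by simpa using hGi _ h)⟩⟩
  let u : ↥G := ⟨_, hi⟩
  refine ⟨s, u, profile_lt_of_other_sidekick (Or.inr (by simp [u])) (fun h => hj ?_)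
    (snd_eq_false_of_not_mem_heroesWith (hG' _ (f s u).2))⟩
  exact mem_insert_of_mem (mem_image.2 ⟨_, (f s u).2, by simpa [s] using h⟩)

end GroupStable

theorem groupStable_heroesWith [Fintype ι] (h4 : 4 ≤ Fintype.card ι) (T : Finset ι) :
    GroupStable (profile e) (heroesWith e T) := by
  intro G hGS hGne G' hG' hcard f hf
  by_cases ha : ∃ u ∈ G, (e u).2 = false ∧ e.symm ((e u).1, true) ∉ G
  · obtain ⟨u, hu, hu₂, hhero⟩ := ha
    exact exists_lt_of_sidekick_mem hG' f hGS.subset hu hu₂ hhero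
  by_cases hb : ∀ i, e.symm (i, true) ∈ G
  · exact exists_lt_of_heroes_subset hG' f hGS hb
  push Not at ha hb
  obtain ⟨j, hj⟩ := hb
  have hhero : ∀ v ∈ G, e.symm ((e v).1, true) ∈ G := fun v hv => by
    cases h : (e v).2
    · exact ha v hv h
    · simpa [← h] using hv
  obtain ⟨g, hg⟩ := hGne
  by_cases hc : ∃ i ≠ (e g).1, e.symm (i, true) ∈ G
  · obtain ⟨i, hi, hiG⟩ := hc
    exact exists_lt_of_two_heroes_mem hG' f (fun s => (hf s).1) hj hi hiG (hhero g hg)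
  · push Not at hc
    exact exists_lt_of_subset_pair hG' f h4 hcard (hhero g hg)
      fun v hv => by_contra fun h => hc _ h (hhero v hv)

end HeroSidekick

/-- hero-and-sidekick lower bound: for every even `n ≥ 8` there is a
preference network on `n` members in which at least `2^(n/2)` distinct subsets satisfy
both the Group Stability and Self-Approval axioms. -/
theorem stmt_17 (n : ℕ) (h8 : 8 ≤ n) (heven : n % 2 = 0) :
    ∃ P : Fin n → Pref (Fin n),
      2 ^ (n / 2) ≤
        Nat.card {S : Finset (Fin n) // GroupStable P S ∧ SelfApprove P S} := by
  let e : Fin n ≃ Fin (n / 2) × Bool := Fintype.equivOfCardEq (by simp; omega)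
  have h4 : 4 ≤ Fintype.card (Fin (n / 2)) := by simp; omega
  have : Nonempty (Fin (n / 2)) := Fintype.card_pos_iff.mp (by omega)
  refine ⟨HeroSidekick.profile e, ?_⟩
  calc 2 ^ (n / 2) = Nat.card (Finset (Fin (n / 2))) := by simp [Nat.card_eq_fintype_card]
    _ ≤ _ := Nat.card_le_card_of_injective
        (fun T => ⟨HeroSidekick.heroesWith e T, HeroSidekick.groupStable_heroesWith h4 T,
          HeroSidekick.selfApprove_heroesWith T⟩)
        fun _ _ h => HeroSidekick.heroesWith_injective (congrArg Subtype.val h)
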